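/- arXiv:2404.00116 — 3 statements merged into one kernel-verified Lean document; each statement's English description precedes it below -/
import Mathlib

section
/- Conservation identity for the left backward shock (equation (3.25) in the proof of Lemma 3.1): Let f, θ, T be as in the context, let B > θ, R ∈ (0, T·f'(B)), and let y : [R/f'(B), T] → ℝ be a solution of the left backward-shock Cauchy problem with data (R,B). Set u := (f')⁻¹((y(T)+R)/T). Then B̄·y(T) + B·R − T·(u·f'(u) − f(u)) − T·f(B) = 0. (Equivalently, writing f* for the Legendre transform of f, B̄·y(T) + B·R − T·f*((y(T)+R)/T) − T·f(B) = 0, since f*(f'(u)) = u·f'(u) − f(u).) -/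
/-
Write `f*(p) = p·(f')⁻¹(p) − f((f')⁻¹(p))` for the Legendre transform, whose derivative is
`(f')⁻¹`. Along the shock, with `p(s) = (y(s) + R)/s` and `u(s) = (f')⁻¹(p(s))`, the quantity
`B̄·y(s) − s·f*(p(s))` has derivative `(B̄ − u)·λ(u, B̄) + f(u) = f(B̄)`, since `s·p' = y' − p`.
It therefore grows by `(T − t₀)·f(B̄) = (T − t₀)·f(B)` between `t₀ = R/f'(B)` and `T`, and at
`t₀` it equals `−t₀·f*(f'(B)) = t₀·f(B) − B·R`.
-/

noncomputable section

open Set Filter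

/-- The Rankine–Hugoniot speed `λ(u,v) = (f(v) - f(u)) / (v - u)`. -/
def lamF (f : ℝ → ℝ) (u v : ℝ) : ℝ := (f v - f u) / (v - u)

/-- `y` solves the left backward-shock Cauchy problem with data `(R, B)` on
`[R / f'(B), T]`:  `y(R/f'(B)) = 0` and `y'(t) = λ((f')⁻¹((y(t)+R)/t), B̄)`.
Here `finv` denotes the inverse of `deriv f`. -/
def LeftShockSol (f finv : ℝ → ℝ) (T B Bbar R : ℝ) (y : ℝ → ℝ) : Prop :=
  y (R / deriv f B) = 0 ∧
  ∀ t ∈ Icc (R / deriv f B) T,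
    HasDerivWithinAt y (lamF f (finv ((y t + R) / t)) Bbar) (Icc (R / deriv f B) T) t

/-- `x` solves the right backward-shock Cauchy problem with data `(L, A)` on
`[L / f'(A), T]`:  `x(L/f'(A)) = 0` and `x'(t) = λ((f')⁻¹((x(t)+L)/t), Ā)`.
Here `finv` denotes the inverse of `deriv f`. -/
def RightShockSol (f finv : ℝ → ℝ) (T A Abar L : ℝ) (x : ℝ → ℝ) : Prop :=
  x (L / deriv f A) = 0 ∧
  ∀ t ∈ Icc (L / deriv f A) T,
    HasDerivWithinAt x (lamF f (finv ((x t + L) / t)) Abar) (Icc (L / deriv f A) T) t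

def legendreTransform (f finv : ℝ → ℝ) (p : ℝ) : ℝ := p * finv p - f (finv p)

theorem sub_mul_lamF (f : ℝ → ℝ) (u v : ℝ) : (v - u) * lamF f u v = f v - f u := by
  rcases eq_or_ne u v with rfl | huv
  · simp
  · exact mul_div_cancel₀ _ (sub_ne_zero.mpr huv.symm)

theorem eq_add_mul_sub_of_hasDerivWithinAt_Icc {F : ℝ → ℝ} {a b c : ℝ} (hab : a ≤ b)
    (hF : ∀ t ∈ Icc a b, HasDerivWithinAt F c (Icc a b) t) : F b = F a + c * (b - a) := by
  have hF_right : ∀ t ∈ Ico a b, HasDerivWithinAt F c (Ici t) t := fun t ht =>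
    (hF t (Ico_subset_Icc_self ht)).mono_of_mem_nhdsWithin (Icc_mem_nhdsGE_of_mem ht)
  have hline : ∀ t ∈ Ico a b, HasDerivWithinAt (fun s => F a + c * (s - a)) c (Ici t) t :=
    fun t _ => by simpa using (((hasDerivAt_id t).sub_const a).const_mul c).const_add (F a)
      |>.hasDerivWithinAt
  exact eq_of_has_deriv_right_eq hF_right hline
    (fun t ht => (hF t ht).continuousWithinAt) (by fun_prop) (by simp) b ⟨hab, le_rfl⟩

theorem hasDerivAt_rightInverse_of_deriv_pos {g ginv : ℝ → ℝ} (hg : Differentiable ℝ g)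
    (hg' : ∀ x, 0 < deriv g x) (hright : ∀ p, g (ginv p) = p) (p : ℝ) :
    HasDerivAt ginv (deriv g (ginv p))⁻¹ p := by
  have hmono : StrictMono g := strictMono_of_deriv_pos hg'
  have hleft : Function.LeftInverse ginv g :=
    Function.LeftInverse.rightInverse_of_injective hright hmono.injective
  have hinv_mono : StrictMono ginv := fun p q hpq => hmono.lt_iff_lt.mp (by rwa [hright, hright])
  have hcont : Continuous ginv := hinv_mono.monotone.continuous_of_surjective hleft.surjective
  exact (hg (ginv p)).hasDerivAt.of_local_left_inverse hcont.continuousAt (hg' _).ne'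
    (.of_forall hright)

theorem hasDerivAt_legendreTransform {f finv : ℝ → ℝ} {p u' : ℝ}
    (hf : DifferentiableAt ℝ f (finv p)) (hfinv : HasDerivAt finv u' p)
    (hright : deriv f (finv p) = p) :
    HasDerivAt (legendreTransform f finv) (finv p) p := by
  have h : HasDerivAt (fun q => q * finv q - f (finv q)) (1 * finv p + p * u' - p * u') p := by
    simpa only [hright, Function.comp_apply] using
      ((hasDerivAt_id' p).fun_mul hfinv).fun_sub (hf.hasDerivAt.comp p hfinv)
  exact h.congr_deriv (by ring)

theorem hasDerivWithinAt_shock_balance {f finv y : ℝ → ℝ} {S : Set ℝ} {Bbar R t : ℝ}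
    (ht : t ≠ 0)
    (hy : HasDerivWithinAt y (lamF f (finv ((y t + R) / t)) Bbar) S t)
    (hL : HasDerivAt (legendreTransform f finv) (finv ((y t + R) / t)) ((y t + R) / t)) :
    HasDerivWithinAt (fun s => Bbar * y s - s * legendreTransform f finv ((y s + R) / s))
      (f Bbar) S t := by
  set u := finv ((y t + R) / t)
  set v := lamF f u Bbar
  have hslope : HasDerivWithinAt (fun s => (y s + R) / s) ((v * t - (y t + R) * 1) / t ^ 2) S t :=
    (hy.add_const R).div (hasDerivAt_id' t).hasDerivWithinAt ht
  have hLs : HasDerivWithinAt (fun s => legendreTransform f finv ((y s + R) / s))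
      (u * ((v * t - (y t + R) * 1) / t ^ 2)) S t :=
    hL.comp_hasDerivWithinAt (h := fun s => (y s + R) / s) t hslope
  refine ((hy.const_mul Bbar).fun_sub
    ((hasDerivAt_id' t).hasDerivWithinAt.fun_mul hLs)).congr_deriv ?_
  have ht_slope : t * ((v * t - (y t + R) * 1) / t ^ 2) = v - (y t + R) / t := by
    field_simp
  simp only [legendreTransform]
  linear_combination sub_mul_lamF f u Bbar - u * ht_slope

theorem left_backward_shock_conservation_identity_general
    (f : ℝ → ℝ) (a : ℝ) (ha : 0 < a) (hf : ContDiff ℝ 2 f)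
    (hf2 : ∀ u : ℝ, a ≤ deriv (deriv f) u)
    (finv : ℝ → ℝ)
    (hfinv2 : ∀ p : ℝ, deriv f (finv p) = p)
    (T : ℝ) (hT : 0 < T)
    (B Bbar : ℝ) (hBbar2 : f Bbar = f B)
    (R : ℝ) (hR : R ∈ Ioo (0:ℝ) (T * deriv f B))
    (y : ℝ → ℝ) (hy : LeftShockSol f finv T B Bbar R y) :
    Bbar * y T + B * R -
        T * (finv ((y T + R) / T) * deriv f (finv ((y T + R) / T)) -
              f (finv ((y T + R) / T))) -
        T * f B = 0 := by
  obtain ⟨hy0, hy'⟩ := hy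
  have hfd : Differentiable ℝ f := hf.differentiable (by norm_num)
  have hf'd : Differentiable ℝ (deriv f) :=
    (contDiff_succ_iff_deriv.mp (by exact_mod_cast hf : ContDiff ℝ (1 + 1) f)).2.2.differentiable
      one_ne_zero
  have hf'' (u : ℝ) : 0 < deriv (deriv f) u := ha.trans_le (hf2 u)
  have hL (p : ℝ) : HasDerivAt (legendreTransform f finv) (finv p) p :=
    hasDerivAt_legendreTransform (hfd _) (hasDerivAt_rightInverse_of_deriv_pos hf'd hf'' hfinv2 p)
      (hfinv2 p)
  have hfB : 0 < deriv f B := pos_of_mul_pos_right (hR.1.trans hR.2) hT.le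
  have ht₀ : 0 < R / deriv f B := div_pos hR.1 hfB
  have ht₀T : R / deriv f B ≤ T := (div_le_iff₀ hfB).mpr hR.2.le
  have hB : finv (deriv f B) = B := (strictMono_of_deriv_pos hf'').injective (hfinv2 _)
  have hbalance := eq_add_mul_sub_of_hasDerivWithinAt_Icc ht₀T fun t ht =>
    hasDerivWithinAt_shock_balance (ht₀.trans_le ht.1).ne' (hy' t ht) (hL _)
  simp only [hy0, zero_add, div_div_cancel₀ hR.1.ne', hB, legendreTransform] at hbalance
  rw [hfinv2]
  linear_combination hbalance + (T - R / deriv f B) * hBbar2 - B * div_mul_cancel₀ R hfB.ne'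

/-- **Equation (3.25)**: conservation identity satisfied by the terminal value of the
left backward shock. -/
theorem left_backward_shock_conservation_identity
    (f : ℝ → ℝ) (a : ℝ) (ha : 0 < a) (hf : ContDiff ℝ 2 f)
    (hf2 : ∀ u : ℝ, a ≤ deriv (deriv f) u)
    (θ : ℝ) (hθ : deriv f θ = 0)
    (finv : ℝ → ℝ) (hfinv1 : ∀ u : ℝ, finv (deriv f u) = u)
    (hfinv2 : ∀ p : ℝ, deriv f (finv p) = p)
    (T : ℝ) (hT : 0 < T)
    (B Bbar : ℝ) (hB : θ < B) (hBbar1 : Bbar ≤ θ) (hBbar2 : f Bbar = f B)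
    (R : ℝ) (hR : R ∈ Ioo (0:ℝ) (T * deriv f B))
    (y : ℝ → ℝ) (hy : LeftShockSol f finv T B Bbar R y) :
    Bbar * y T + B * R -
        T * (finv ((y T + R) / T) * deriv f (finv ((y T + R) / T)) -
              f (finv ((y T + R) / T))) -
        T * f B = 0 :=
  left_backward_shock_conservation_identity_general f a ha hf hf2 finv hfinv2 T hT B Bbar hBbar2 R
    hR y hy
end
end

section
/- Monotonicity, bounds and limits of the extremal shock states u[R,B,f] and v[L,A,f] (Remark 3.2): Let f, θ, T be as in the context. (a) Fix B > θ and, for each R ∈ (0, T·f'(B)), let y_R be a solution of the left backward-shock Cauchy problem with data (R,B) and set u[R] := (f')⁻¹((R + y_R(T))/T). Then R ↦ u[R] is strictly increasing on (0, T·f'(B)), satisfies B̄ < u[R] < B for all R, and u[R] → B̄ as R → 0⁺ while u[R] → B as R → T·f'(B)⁻. (b) Fix A < θ and, for each L ∈ (T·f'(A), 0), let x_L be a solution of the right backward-shock Cauchy problem with data (L,A) and set v[L] := (f')⁻¹((L + x_L(T))/T). Then L ↦ v[L] is strictly increasing on (T·f'(A), 0), satisfies A < v[L] < Ā for all L, and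 v[L] → A as L → T·f'(A)⁺ while v[L] → Ā as L → 0⁻. -/
/-!
Along a solution `y` put `u(t) = (f')⁻¹((y(t) + R)/t)`. Because the shock travels with the
Rankine–Hugoniot speed `λ(u, B̄)`, the quantity `t · D(u(t))` is conserved, where
`D(v) = f(B̄) - f(v) - f'(v)(B̄ - v)` is the Bregman divergence of `f`. At the starting time
`R / f'(B)` we have `u = B`, so `T · D(u[R]) = R (B - B̄)`. This never vanishes, so `u` cannot
cross `B̄` and stays in `(B̄, ∞)`, where `D` is strictly increasing: `u[R]` is the inverse image of
a linear increasing function of `R` under `D`, and its bounds and limits are read off from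
`D(B̄) = 0` and `D(B) = f'(B) (B - B̄)`. Part (b) is the same invariant with `Ā` for `B̄`, on
`(-∞, Ā)`, where `D` is strictly decreasing.
-/

noncomputable section

open Set Filter

open Topology Function

theorem StrictMonoOn.tendsto_of_tendsto_comp {α β ι : Type*} [LinearOrder α] [TopologicalSpace α]
    [OrderTopology α] [LinearOrder β] [TopologicalSpace β] [OrderTopology β] {l : Filter ι}
    {G : α → β} {U : ι → α} {s : Set α} [hs : s.OrdConnected] {p : α} (hG : StrictMonoOn G s)
    (hp : p ∈ s) (hU : ∀ᶠ x in l, U x ∈ s) (h : Tendsto (G ∘ U) l (𝓝 (G p))) :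
    Tendsto U l (𝓝 p) := by
  refine tendsto_order.2 ⟨fun b hb => ?_, fun b hb => ?_⟩
  · by_cases hbs : b ∈ s
    · filter_upwards [hU, (tendsto_order.1 h).1 (G b) (hG hbs hp hb)] with x hxs hx
      exact (hG.lt_iff_lt hbs hxs).1 hx
    · filter_upwards [hU] with x hxs
      by_contra! hxb
      exact hbs (hs.out hxs hp ⟨hxb, hb.le⟩)
  · by_cases hbs : b ∈ s
    · filter_upwards [hU, (tendsto_order.1 h).2 (G b) (hG hp hbs hb)] with x hxs hx
      exact (hG.lt_iff_lt hxs hbs).1 hx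
    · filter_upwards [hU] with x hxs
      by_contra! hxb
      exact hbs (hs.out hp hxs ⟨hb.le, hxb⟩)

theorem StrictMonoOn.strictMonoOn_bounds_tendsto_of_comp_eq {G U h : ℝ → ℝ} {s : Set ℝ}
    [s.OrdConnected] {l r p q : ℝ} (hG : StrictMonoOn G s) (hh : StrictMono h)
    (hhc : Continuous h) (hlr : l < r) (hp : p ∈ s) (hq : q ∈ s) (hGp : G p = h l) (hGq : G q = h r)
    (hU : ∀ x ∈ Ioo l r, U x ∈ s ∧ G (U x) = h x) :
    StrictMonoOn U (Ioo l r) ∧ (∀ x ∈ Ioo l r, p < U x ∧ U x < q) ∧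
      Tendsto U (𝓝[>] l) (𝓝 p) ∧ Tendsto U (𝓝[<] r) (𝓝 q) := by
  refine ⟨fun x hx y hy hxy => ?_, fun x hx => ⟨?_, ?_⟩, ?_, ?_⟩
  · rw [← hG.lt_iff_lt (hU x hx).1 (hU y hy).1, (hU x hx).2, (hU y hy).2]
    exact hh hxy
  · rw [← hG.lt_iff_lt hp (hU x hx).1, hGp, (hU x hx).2]
    exact hh hx.1
  · rw [← hG.lt_iff_lt (hU x hx).1 hq, hGq, (hU x hx).2]
    exact hh hx.2
  · have hI : Ioo l r ∈ 𝓝[>] l := Ioo_mem_nhdsGT hlr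
    refine hG.tendsto_of_tendsto_comp hp (eventually_of_mem hI fun x hx => (hU x hx).1) ?_
    rw [hGp]
    exact ((hhc.tendsto l).mono_left nhdsWithin_le_nhds).congr'
      (eventually_of_mem hI fun x hx => (hU x hx).2.symm)
  · have hI : Ioo l r ∈ 𝓝[<] r := Ioo_mem_nhdsLT hlr
    refine hG.tendsto_of_tendsto_comp hq (eventually_of_mem hI fun x hx => (hU x hx).1) ?_
    rw [hGq]
    exact ((hhc.tendsto r).mono_left nhdsWithin_le_nhds).congr'
      (eventually_of_mem hI fun x hx => (hU x hx).2.symm)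

def bregmanDiv (f : ℝ → ℝ) (c v : ℝ) : ℝ := f c - f v - deriv f v * (c - v)

@[simp]
theorem bregmanDiv_self (f : ℝ → ℝ) (c : ℝ) : bregmanDiv f c c = 0 := by
  simp [bregmanDiv]

/-- The Rankine–Hugoniot speed is exactly what makes `t * bregmanDiv f c (u t)` conserved along a
`LeftShockSol`. -/
theorem bregmanDiv_add_mul_lamF_sub (f : ℝ → ℝ) (c u : ℝ) :
    bregmanDiv f c u + (u - c) * (lamF f u c - deriv f u) = 0 := by
  rcases eq_or_ne u c with rfl | huc
  · simp
  · have hslope : (c - u) * lamF f u c = f c - f u := mul_div_cancel₀ _ (sub_ne_zero.2 huc.symm)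
    rw [bregmanDiv]
    linear_combination -hslope

section Bregman

variable {f : ℝ → ℝ}

theorem bregmanDiv_of_eq {c B : ℝ} (hfc : f c = f B) :
    bregmanDiv f c B = deriv f B * (B - c) := by
  rw [bregmanDiv, hfc]
  ring

theorem hasDerivAt_bregmanDiv (hf : ContDiff ℝ 2 f) (c v : ℝ) :
    HasDerivAt (bregmanDiv f c) (deriv (deriv f) v * (v - c)) v := by
  have hd : HasDerivAt (fun x => f c - f x - deriv f x * (c - x))
      (-deriv f v - (deriv (deriv f) v * (c - v) + deriv f v * -1)) v :=
    ((hf.differentiable two_ne_zero v).hasDerivAt.const_sub (f c)).sub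
      ((hf.differentiable_deriv_two v).hasDerivAt.mul ((hasDerivAt_id' v).const_sub c))
  exact hd.congr_deriv (by ring)

theorem strictMonoOn_bregmanDiv (hf : ContDiff ℝ 2 f) (hf'' : ∀ u, 0 < deriv (deriv f) u)
    (c : ℝ) : StrictMonoOn (bregmanDiv f c) (Ici c) := by
  refine strictMonoOn_of_deriv_pos (convex_Ici c)
    (fun v _ => (hasDerivAt_bregmanDiv hf c v).continuousAt.continuousWithinAt) fun v hv => ?_
  rw [interior_Ici] at hv
  rw [(hasDerivAt_bregmanDiv hf c v).deriv]
  exact mul_pos (hf'' v) (sub_pos.2 hv)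

theorem strictAntiOn_bregmanDiv (hf : ContDiff ℝ 2 f) (hf'' : ∀ u, 0 < deriv (deriv f) u)
    (c : ℝ) : StrictAntiOn (bregmanDiv f c) (Iic c) := by
  refine strictAntiOn_of_deriv_neg (convex_Iic c)
    (fun v _ => (hasDerivAt_bregmanDiv hf c v).continuousAt.continuousWithinAt) fun v hv => ?_
  rw [interior_Iic] at hv
  rw [(hasDerivAt_bregmanDiv hf c v).deriv]
  exact mul_neg_of_pos_of_neg (hf'' v) (sub_neg.2 hv)

end Bregman

section InverseDerivative

variable {f finv : ℝ → ℝ}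

theorem continuous_of_rightInverse_deriv (hf'' : ∀ u, 0 < deriv (deriv f) u)
    (hl : LeftInverse finv (deriv f)) (hr : RightInverse finv (deriv f)) : Continuous finv := by
  have hmono : StrictMono (deriv f) := strictMono_of_deriv_pos hf''
  exact Monotone.continuous_of_surjective (fun p q hpq => by rwa [← hmono.le_iff_le, hr, hr])
    hl.surjective

theorem hasDerivAt_of_rightInverse_deriv (hf : ContDiff ℝ 2 f)
    (hf'' : ∀ u, 0 < deriv (deriv f) u) (hl : LeftInverse finv (deriv f))
    (hr : RightInverse finv (deriv f)) (p : ℝ) :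
    HasDerivAt finv (deriv (deriv f) (finv p))⁻¹ p :=
  HasDerivAt.of_local_left_inverse (continuous_of_rightInverse_deriv hf'' hl hr).continuousAt
    (hf.differentiable_deriv_two _).hasDerivAt (hf'' _).ne' (Eventually.of_forall hr)

end InverseDerivative

theorem rightShockSol_iff_leftShockSol {f finv x : ℝ → ℝ} {T A Abar L : ℝ} :
    RightShockSol f finv T A Abar L x ↔ LeftShockSol f finv T A Abar L x :=
  Iff.rfl

namespace LeftShockSol

variable {f finv y : ℝ → ℝ} {T B c R : ℝ}

theorem finv_start (hl : LeftInverse finv (deriv f)) (hy : LeftShockSol f finv T B c R y)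
    (hR : R ≠ 0) : finv ((y (R / deriv f B) + R) / (R / deriv f B)) = B := by
  rw [hy.1, zero_add, div_div_cancel₀ hR, hl]

theorem continuousOn (hy : LeftShockSol f finv T B c R y) :
    ContinuousOn y (Icc (R / deriv f B) T) :=
  fun t ht => (hy.2 t ht).continuousWithinAt

theorem hasDerivWithinAt_mul_bregmanDiv (hf : ContDiff ℝ 2 f)
    (hf'' : ∀ u, 0 < deriv (deriv f) u) (hl : LeftInverse finv (deriv f))
    (hr : RightInverse finv (deriv f)) (hy : LeftShockSol f finv T B c R y)
    (ht₀ : 0 < R / deriv f B) {t : ℝ} (ht : t ∈ Icc (R / deriv f B) T) :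
    HasDerivWithinAt (fun τ => τ * bregmanDiv f c (finv ((y τ + R) / τ))) 0
      (Icc (R / deriv f B) T) t := by
  have htpos : 0 < t := ht₀.trans_le ht.1
  set u := finv ((y t + R) / t)
  have hw : HasDerivWithinAt (fun τ => (y τ + R) / τ)
      ((lamF f u c * t - (y t + R) * 1) / t ^ 2) (Icc (R / deriv f B) T) t :=
    ((hy.2 t ht).add_const R).div (hasDerivWithinAt_id t _) htpos.ne'
  have hD := (hasDerivAt_bregmanDiv hf c u).comp_hasDerivWithinAt t
    ((hasDerivAt_of_rightInverse_deriv hf hf'' hl hr _).comp_hasDerivWithinAt t hw)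
  refine ((hasDerivWithinAt_id t _).mul hD).congr_deriv ?_
  have hfu : deriv f u = (y t + R) / t := hr _
  have hf''u := (hf'' u).ne'
  have hrate : t * (deriv (deriv f) u * (u - c) *
      ((deriv (deriv f) u)⁻¹ * ((lamF f u c * t - (y t + R) * 1) / t ^ 2))) =
      (u - c) * (lamF f u c - deriv f u) := by
    rw [hfu]
    field_simp
  simp only [comp_apply, id]
  linear_combination hrate + bregmanDiv_add_mul_lamF_sub f c u

theorem mul_bregmanDiv_eq (hf : ContDiff ℝ 2 f) (hf'' : ∀ u, 0 < deriv (deriv f) u)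
    (hl : LeftInverse finv (deriv f)) (hr : RightInverse finv (deriv f))
    (hy : LeftShockSol f finv T B c R y) (ht₀ : 0 < R / deriv f B) {t : ℝ}
    (ht : t ∈ Icc (R / deriv f B) T) :
    t * bregmanDiv f c (finv ((y t + R) / t)) = R / deriv f B * bregmanDiv f c B := by
  have hR : R ≠ 0 := by rintro rfl; simp at ht₀
  have hderiv := fun t (ht : t ∈ Icc (R / deriv f B) T) =>
    hy.hasDerivWithinAt_mul_bregmanDiv hf hf'' hl hr ht₀ ht
  have hconst := constant_of_has_deriv_right_zero
    (fun t ht => (hderiv t ht).continuousWithinAt)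
    (fun t ht => (hderiv t (Ico_subset_Icc_self ht)).mono_of_mem_nhdsWithin
      (Icc_mem_nhdsGE_of_mem ht)) t ht
  rw [hconst, hy.finv_start hl hR]

theorem mul_bregmanDiv_eq_of_apply_eq (hf : ContDiff ℝ 2 f)
    (hf'' : ∀ u, 0 < deriv (deriv f) u) (hl : LeftInverse finv (deriv f))
    (hr : RightInverse finv (deriv f)) (hy : LeftShockSol f finv T B c R y) (hfc : f c = f B)
    (ht₀ : 0 < R / deriv f B) {t : ℝ} (ht : t ∈ Icc (R / deriv f B) T) :
    t * bregmanDiv f c (finv ((y t + R) / t)) = R * (B - c) := by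
  have hB : deriv f B ≠ 0 := by intro h; simp [h] at ht₀
  rw [hy.mul_bregmanDiv_eq hf hf'' hl hr ht₀ ht, bregmanDiv_of_eq hfc]
  field_simp

theorem not_mem_uIcc (hf : ContDiff ℝ 2 f) (hf'' : ∀ u, 0 < deriv (deriv f) u)
    (hl : LeftInverse finv (deriv f)) (hr : RightInverse finv (deriv f))
    (hy : LeftShockSol f finv T B c R y) (hfc : f c = f B) (hcB : c ≠ B)
    (ht₀ : 0 < R / deriv f B) {t : ℝ} (ht : t ∈ Icc (R / deriv f B) T) :
    c ∉ uIcc B (finv ((y t + R) / t)) := by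
  intro hc
  have hR : R ≠ 0 := by rintro rfl; simp at ht₀
  have hcont : ContinuousOn (fun τ => finv ((y τ + R) / τ)) (uIcc (R / deriv f B) t) := by
    rw [uIcc_of_le ht.1]
    exact (continuous_of_rightInverse_deriv hf'' hl hr).comp_continuousOn
      (((hy.continuousOn.mono (Icc_subset_Icc_right ht.2)).add continuousOn_const).div
        continuousOn_id fun τ hτ => (ht₀.trans_le hτ.1).ne')
  obtain ⟨τ, hτ, hτc : finv ((y τ + R) / τ) = c⟩ :=
    intermediate_value_uIcc hcont (by rwa [hy.finv_start hl hR])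
  rw [uIcc_of_le ht.1] at hτ
  have hconserved := hy.mul_bregmanDiv_eq_of_apply_eq hf hf'' hl hr hfc ht₀
    (Icc_subset_Icc_right ht.2 hτ)
  rw [hτc, bregmanDiv_self, mul_zero] at hconserved
  exact mul_ne_zero hR (sub_ne_zero.2 hcB.symm) hconserved.symm

end LeftShockSol

section ExtremalStates

variable {f finv : ℝ → ℝ} {T : ℝ}

theorem leftExtremalState_strictMonoOn_bounds_tendsto (hf : ContDiff ℝ 2 f)
    (hf'' : ∀ u, 0 < deriv (deriv f) u) (hl : LeftInverse finv (deriv f))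
    (hr : RightInverse finv (deriv f)) (hT : 0 < T) {B Bbar : ℝ} (hBB : Bbar < B)
    (hfB : 0 < deriv f B) (hBbar : f Bbar = f B) {U : ℝ → ℝ}
    (hU : ∀ R ∈ Ioo 0 (T * deriv f B),
      ∃ y, LeftShockSol f finv T B Bbar R y ∧ U R = finv ((R + y T) / T)) :
    StrictMonoOn U (Ioo 0 (T * deriv f B)) ∧
      (∀ R ∈ Ioo 0 (T * deriv f B), Bbar < U R ∧ U R < B) ∧
      Tendsto U (𝓝[>] 0) (𝓝 Bbar) ∧ Tendsto U (𝓝[<] (T * deriv f B)) (𝓝 B) := by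
  refine (strictMonoOn_bregmanDiv hf hf'' Bbar).strictMonoOn_bounds_tendsto_of_comp_eq
    (strictMono_mul_left_of_pos (div_pos (sub_pos.2 hBB) hT)) (continuous_const_mul _)
    (mul_pos hT hfB) self_mem_Ici hBB.le (by simp) ?_ fun R hR => ?_
  · rw [bregmanDiv_of_eq hBbar]
    field_simp
  · obtain ⟨y, hy, hUR⟩ := hU R hR
    have ht₀ : 0 < R / deriv f B := div_pos hR.1 hfB
    have hT : T ∈ Icc (R / deriv f B) T := ⟨(div_le_iff₀ hfB).2 (by linarith [hR.2]), le_rfl⟩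
    have hconserved := hy.mul_bregmanDiv_eq_of_apply_eq hf hf'' hl hr hBbar ht₀ hT
    have hside := hy.not_mem_uIcc hf hf'' hl hr hBbar hBB.ne ht₀ hT
    rw [hUR, add_comm R]
    refine ⟨le_of_not_gt fun h => hside (mem_uIcc.2 (Or.inr ⟨h.le, hBB.le⟩)), ?_⟩
    field_simp
    linarith

theorem rightExtremalState_strictMonoOn_bounds_tendsto (hf : ContDiff ℝ 2 f)
    (hf'' : ∀ u, 0 < deriv (deriv f) u) (hl : LeftInverse finv (deriv f))
    (hr : RightInverse finv (deriv f)) (hT : 0 < T) {A Abar : ℝ} (hAA : A < Abar)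
    (hfA : deriv f A < 0) (hAbar : f Abar = f A) {V : ℝ → ℝ}
    (hV : ∀ L ∈ Ioo (T * deriv f A) 0,
      ∃ x, RightShockSol f finv T A Abar L x ∧ V L = finv ((L + x T) / T)) :
    StrictMonoOn V (Ioo (T * deriv f A) 0) ∧
      (∀ L ∈ Ioo (T * deriv f A) 0, A < V L ∧ V L < Abar) ∧
      Tendsto V (𝓝[>] (T * deriv f A)) (𝓝 A) ∧ Tendsto V (𝓝[<] 0) (𝓝 Abar) := by
  refine (strictAntiOn_bregmanDiv hf hf'' Abar).neg.strictMonoOn_bounds_tendsto_of_comp_eq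
    (strictMono_mul_left_of_pos (div_pos (sub_pos.2 hAA) hT)) (continuous_const_mul _)
    (mul_neg_of_pos_of_neg hT hfA) hAA.le self_mem_Iic ?_ (by simp) fun L hL => ?_
  · rw [bregmanDiv_of_eq hAbar]
    field_simp
    ring
  · obtain ⟨x, hx, hVL⟩ := hV L hL
    replace hx := rightShockSol_iff_leftShockSol.1 hx
    have ht₀ : 0 < L / deriv f A := div_pos_of_neg_of_neg hL.2 hfA
    have hT : T ∈ Icc (L / deriv f A) T :=
      ⟨(div_le_iff_of_neg hfA).2 (by linarith [hL.1]), le_rfl⟩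
    have hconserved := hx.mul_bregmanDiv_eq_of_apply_eq hf hf'' hl hr hAbar ht₀ hT
    have hside := hx.not_mem_uIcc hf hf'' hl hr hAbar hAA.ne' ht₀ hT
    rw [hVL, add_comm L]
    refine ⟨le_of_not_gt fun h => hside (mem_uIcc.2 (Or.inl ⟨hAA.le, h.le⟩)), ?_⟩
    field_simp
    linarith

end ExtremalStates

/-- **Remark 3.2**: monotonicity, bounds and limits of the extremal shock states
`u[R,B,f]` and `v[L,A,f]`. -/
theorem extremal_shock_states_monotone
    (f : ℝ → ℝ) (a : ℝ) (ha : 0 < a) (hf : ContDiff ℝ 2 f)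
    (hf2 : ∀ u : ℝ, a ≤ deriv (deriv f) u)
    (θ : ℝ) (hθ : deriv f θ = 0)
    (finv : ℝ → ℝ) (hfinv1 : ∀ u : ℝ, finv (deriv f u) = u)
    (hfinv2 : ∀ p : ℝ, deriv f (finv p) = p)
    (T : ℝ) (hT : 0 < T)
    (B Bbar : ℝ) (hB : θ < B) (hBbar1 : Bbar ≤ θ) (hBbar2 : f Bbar = f B)
    (A Abar : ℝ) (hA : A < θ) (hAbar1 : θ ≤ Abar) (hAbar2 : f Abar = f A)
    (U V : ℝ → ℝ)
    (hU : ∀ R ∈ Ioo (0:ℝ) (T * deriv f B),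
      ∃ y : ℝ → ℝ, LeftShockSol f finv T B Bbar R y ∧ U R = finv ((R + y T) / T))
    (hV : ∀ L ∈ Ioo (T * deriv f A) (0:ℝ),
      ∃ x : ℝ → ℝ, RightShockSol f finv T A Abar L x ∧ V L = finv ((L + x T) / T)) :
    StrictMonoOn U (Ioo (0:ℝ) (T * deriv f B)) ∧
    (∀ R ∈ Ioo (0:ℝ) (T * deriv f B), Bbar < U R ∧ U R < B) ∧
    Tendsto U (nhdsWithin (0:ℝ) (Ioi 0)) (nhds Bbar) ∧
    Tendsto U (nhdsWithin (T * deriv f B) (Iio (T * deriv f B))) (nhds B) ∧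
    StrictMonoOn V (Ioo (T * deriv f A) (0:ℝ)) ∧
    (∀ L ∈ Ioo (T * deriv f A) (0:ℝ), A < V L ∧ V L < Abar) ∧
    Tendsto V (nhdsWithin (T * deriv f A) (Ioi (T * deriv f A))) (nhds A) ∧
    Tendsto V (nhdsWithin (0:ℝ) (Iio 0)) (nhds Abar) := by
  have hf'' : ∀ u, 0 < deriv (deriv f) u := fun u => ha.trans_le (hf2 u)
  have hmono : StrictMono (deriv f) := strictMono_of_deriv_pos hf''
  have hfB : 0 < deriv f B := hθ ▸ hmono hB
  have hfA : deriv f A < 0 := hθ ▸ hmono hA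
  obtain ⟨hU₁, hU₂, hU₃, hU₄⟩ := leftExtremalState_strictMonoOn_bounds_tendsto hf hf'' hfinv1
    hfinv2 hT (hBbar1.trans_lt hB) hfB hBbar2 hU
  obtain ⟨hV₁, hV₂, hV₃, hV₄⟩ := rightExtremalState_strictMonoOn_bounds_tendsto hf hf'' hfinv1
    hfinv2 hT (hA.trans_le hAbar1) hfA hAbar2 hV
  exact ⟨hU₁, hU₂, hU₃, hU₄, hV₁, hV₂, hV₃, hV₄⟩
end
end

section
/- Strict inequalities for the shock starting times (equations (3.41) and (3.50)): Let f, θ, T be as in the context. (a) For every B > θ, every R ∈ (0, T·f'(B)) and every solution y of the left backward-shock Cauchy problem with data (R,B), one has, with τ := y(T)/f'(B̄) ∈ (0,T): f'(B)·(T − τ) > R, i.e. R/f'(B) < T − y(T)/f'(B̄). (b) For every A < θ, every L ∈ (T·f'(A), 0) and every solution x of the right backward-shock Cauchy problem with data (L,A), one has, with σ := x(T)/f'(Ā) ∈ (0,T): f'(A)·(T − σ) < L, i.e. L/f'(A) < T − x(T)/f'(Ā). -/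
noncomputable section

open Set Filter

/-!
The reflection `u ↦ -u` turns the right problem into the left one, so only the left problem is
treated. There `c = f'(B̄) < 0 < d = f'(B)`, the shock starts at `t₀ = R/d`, and we write
`u(t) = (f')⁻¹((y + R)/t)`, so that `y' = λ(u, B̄)`. Two barrier arguments keep the speed
`(y + R)/t` in `(c, d]`: above the line `y + R = c t` we have `u > B̄`, hence `y' > c`; and the
line `y + R = d t` can only be touched where `u = B`, where `y' = λ(B, B̄) = 0 < d`.
Strict convexity then gives `y' < f'(u) ≤ d`, so the speed is `< d` after `t₀`, hence
`B̄ < u < B` and `y' < 0` because `f(u) < f(B) = f(B̄)`. Integrating `c < y' < 0` over `[t₀, T]`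
gives `c (T - t₀) < y(T) < 0`, i.e. `0 < τ < T - t₀`.
-/

lemma lamF_eq_slope (f : ℝ → ℝ) (u v : ℝ) : lamF f u v = slope f u v :=
  (slope_def_field f u v).symm

lemma lamF_comm (f : ℝ → ℝ) (u v : ℝ) : lamF f u v = lamF f v u := by
  simp only [lamF_eq_slope, slope_comm]

lemma lamF_comp_neg (f : ℝ → ℝ) (u v : ℝ) :
    lamF (fun w => f (-w)) (-u) (-v) = -lamF f u v := by
  simp only [lamF, neg_neg]
  rw [show -v - -u = -(v - u) by ring, div_neg]

section StrictConvex

variable {f : ℝ → ℝ} {u v : ℝ}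

lemma deriv_lt_lamF (hfc : StrictConvexOn ℝ univ f) (hf : DifferentiableAt ℝ f u)
    (huv : u < v) : deriv f u < lamF f v u := by
  rw [lamF_comm, lamF_eq_slope]
  exact hfc.deriv_lt_slope trivial trivial huv hf

lemma lamF_lt_deriv (hfc : StrictConvexOn ℝ univ f) (hf : DifferentiableAt ℝ f v)
    (huv : u < v) : lamF f v u < deriv f v := by
  rw [lamF_comm, lamF_eq_slope]
  exact hfc.slope_lt_deriv trivial trivial huv hf

lemma lamF_neg_of_mem_Ioo (hfc : StrictConvexOn ℝ univ f) {a b : ℝ} (hab : f a = f b)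
    (hu : u ∈ Ioo a b) : lamF f u a < 0 := by
  have h := hfc.secant_strict_mono (mem_univ a) (mem_univ u) (mem_univ b) hu.1.ne'
    (hu.1.trans hu.2).ne' hu.2
  rw [← hab, sub_self, zero_div] at h
  rwa [lamF_comm]

end StrictConvex

lemma StrictMono.lt_rightInverse_iff {α β : Type*} [LinearOrder α] [Preorder β] {φ : α → β}
    {ψ : β → α} (hφ : StrictMono φ) (hψ : Function.RightInverse ψ φ) {u : α} {p : β} :
    u < ψ p ↔ φ u < p := by
  rw [← hφ.lt_iff_lt, hψ p]

section Barrier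

variable {g g' : ℝ → ℝ} {a b : ℝ}

lemma HasDerivWithinAt.Ici_of_Icc {x gx : ℝ} (h : HasDerivWithinAt g gx (Icc a b) x)
    (hx : x ∈ Ico a b) : HasDerivWithinAt g gx (Ici x) x :=
  h.mono_of_mem_nhdsWithin <|
    mem_of_superset (Ico_mem_nhdsGE hx.2) fun _ hz => ⟨hx.1.trans hz.1, hz.2.le⟩

lemma nonpos_of_deriv_neg_of_eq_zero
    (hg : ∀ x ∈ Icc a b, HasDerivWithinAt g (g' x) (Icc a b) x) (ha : g a ≤ 0)
    (hzero : ∀ x ∈ Ico a b, g x = 0 → g' x < 0) : ∀ x ∈ Icc a b, g x ≤ 0 :=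
  image_le_of_deriv_right_lt_deriv_boundary' (B := fun _ => 0) (B' := fun _ => 0)
    (fun x hx => (hg x hx).continuousWithinAt)
    (fun x hx => (hg x (Ico_subset_Icc_self hx)).Ici_of_Icc hx) ha continuousOn_const
    (fun x _ => hasDerivWithinAt_const x _ 0) hzero

lemma pos_of_deriv_pos_of_pos
    (hg : ∀ x ∈ Icc a b, HasDerivWithinAt g (g' x) (Icc a b) x) (ha : 0 < g a)
    (hpos : ∀ x ∈ Ico a b, 0 < g x → 0 < g' x) : ∀ x ∈ Icc a b, 0 < g x := by
  have key := nonpos_of_deriv_neg_of_eq_zero (g := fun x => g a / 2 - g x) (g' := fun x => -g' x)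
    (fun x hx => (hg x hx).const_sub _) (by linarith)
    (fun x hx hx0 => neg_neg_of_pos (hpos x hx (by linarith)))
  intro x hx
  linarith [key x hx]

lemma strictMonoOn_Icc_of_hasDerivWithinAt_pos
    (hg : ∀ x ∈ Icc a b, HasDerivWithinAt g (g' x) (Icc a b) x)
    (hpos : ∀ x ∈ Ioo a b, 0 < g' x) : StrictMonoOn g (Icc a b) :=
  strictMonoOn_of_hasDerivWithinAt_pos (convex_Icc a b) (fun x hx => (hg x hx).continuousWithinAt)
    (by
      rw [interior_Icc]
      exact fun x hx => (hg x (Ioo_subset_Icc_self hx)).mono Ioo_subset_Icc_self)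
    (by rwa [interior_Icc])

lemma strictAntiOn_Icc_of_hasDerivWithinAt_neg
    (hg : ∀ x ∈ Icc a b, HasDerivWithinAt g (g' x) (Icc a b) x)
    (hneg : ∀ x ∈ Ioo a b, g' x < 0) : StrictAntiOn g (Icc a b) :=
  strictAntiOn_of_hasDerivWithinAt_neg (convex_Icc a b) (fun x hx => (hg x hx).continuousWithinAt)
    (by
      rw [interior_Icc]
      exact fun x hx => (hg x (Ioo_subset_Icc_self hx)).mono Ioo_subset_Icc_self)
    (by rwa [interior_Icc])

end Barrier

namespace LeftShockSol

variable {f finv : ℝ → ℝ} {T B Bbar R : ℝ} {y : ℝ → ℝ}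

lemma hasDerivWithinAt_add_sub_mul (hy : LeftShockSol f finv T B Bbar R y) (k : ℝ) :
    ∀ t ∈ Icc (R / deriv f B) T, HasDerivWithinAt (fun t => y t + R - t * k)
      (lamF f (finv ((y t + R) / t)) Bbar - k) (Icc (R / deriv f B) T) t :=
  fun t ht => ((hy.2 t ht).add_const R).sub (hasDerivAt_mul_const k).hasDerivWithinAt

lemma mul_deriv_lt_add (hf : Differentiable ℝ f) (hmono : StrictMono (deriv f))
    (hfinv : Function.RightInverse finv (deriv f)) (hBbar : Bbar < B) (hR : 0 < R)
    (hd : 0 < deriv f B) (hy : LeftShockSol f finv T B Bbar R y) :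
    ∀ t ∈ Icc (R / deriv f B) T, t * deriv f Bbar < y t + R := by
  have ht0 : 0 < R / deriv f B := div_pos hR hd
  have key := pos_of_deriv_pos_of_pos (hy.hasDerivWithinAt_add_sub_mul (deriv f Bbar)) ?_ ?_
  · exact fun t ht => sub_pos.1 (key t ht)
  · have := mul_lt_mul_of_pos_left (hmono hBbar) ht0
    simp only [hy.1, zero_add, div_mul_cancel₀ R hd.ne'] at this ⊢
    linarith
  · intro x hx hgx
    have hu : Bbar < finv ((y x + R) / x) :=
      (hmono.lt_rightInverse_iff hfinv).2 (by rw [lt_div_iff₀ (ht0.trans_le hx.1)]; linarith)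
    exact sub_pos.2 (deriv_lt_lamF (hmono.strictConvexOn_univ_of_deriv hf.continuous) (hf _) hu)

lemma add_le_mul_deriv (hmono : StrictMono (deriv f)) (hfinv : Function.RightInverse finv (deriv f))
    (hfB : f Bbar = f B) (hR : 0 < R) (hd : 0 < deriv f B)
    (hy : LeftShockSol f finv T B Bbar R y) :
    ∀ t ∈ Icc (R / deriv f B) T, y t + R ≤ t * deriv f B := by
  have ht0 : 0 < R / deriv f B := div_pos hR hd
  have key := nonpos_of_deriv_neg_of_eq_zero (hy.hasDerivWithinAt_add_sub_mul (deriv f B)) ?_ ?_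
  · exact fun t ht => sub_nonpos.1 (key t ht)
  · simp only [hy.1, zero_add, div_mul_cancel₀ R hd.ne', sub_self, le_refl]
  · intro x hx hgx
    have hp : (y x + R) / x = deriv f B := by
      rw [div_eq_iff (ht0.trans_le hx.1).ne']
      linarith
    rw [hp, hfinv.leftInverse_of_injective hmono.injective B]
    simp [lamF, hfB, hd]

lemma lt_finv (hf : Differentiable ℝ f) (hmono : StrictMono (deriv f))
    (hfinv : Function.RightInverse finv (deriv f)) (hBbar : Bbar < B) (hR : 0 < R)
    (hd : 0 < deriv f B) (hy : LeftShockSol f finv T B Bbar R y) :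
    ∀ t ∈ Icc (R / deriv f B) T, Bbar < finv ((y t + R) / t) := fun t ht =>
  (hmono.lt_rightInverse_iff hfinv).2 <| by
    rw [lt_div_iff₀ ((div_pos hR hd).trans_le ht.1), mul_comm]
    exact hy.mul_deriv_lt_add hf hmono hfinv hBbar hR hd t ht

lemma add_lt_mul_deriv (hf : Differentiable ℝ f) (hmono : StrictMono (deriv f))
    (hfinv : Function.RightInverse finv (deriv f)) (hBbar : Bbar < B) (hfB : f Bbar = f B)
    (hR : 0 < R) (hd : 0 < deriv f B) (hy : LeftShockSol f finv T B Bbar R y) :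
    ∀ t ∈ Ioc (R / deriv f B) T, y t + R < t * deriv f B := by
  have hanti := strictAntiOn_Icc_of_hasDerivWithinAt_neg
    (hy.hasDerivWithinAt_add_sub_mul (deriv f B)) fun x hx => ?_
  · intro t ht
    have := hanti ⟨le_rfl, ht.1.le.trans ht.2⟩ (Ioc_subset_Icc_self ht) ht.1
    simp only [hy.1, zero_add, div_mul_cancel₀ R hd.ne', sub_self] at this
    linarith
  · have hx0 : 0 < x := (div_pos hR hd).trans hx.1
    have hspeed : (y x + R) / x ≤ deriv f B := by
      rw [div_le_iff₀ hx0, mul_comm]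
      exact hy.add_le_mul_deriv hmono hfinv hfB hR hd x (Ioo_subset_Icc_self hx)
    have hslope := lamF_lt_deriv (hmono.strictConvexOn_univ_of_deriv hf.continuous) (hf _)
      (hy.lt_finv hf hmono hfinv hBbar hR hd x (Ioo_subset_Icc_self hx))
    rw [hfinv] at hslope
    linarith

lemma finv_lt (hf : Differentiable ℝ f) (hmono : StrictMono (deriv f))
    (hfinv : Function.RightInverse finv (deriv f)) (hBbar : Bbar < B) (hfB : f Bbar = f B)
    (hR : 0 < R) (hd : 0 < deriv f B) (hy : LeftShockSol f finv T B Bbar R y) :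
    ∀ t ∈ Ioc (R / deriv f B) T, finv ((y t + R) / t) < B := fun t ht => by
  rw [← hmono.lt_iff_lt, hfinv, div_lt_iff₀ ((div_pos hR hd).trans ht.1), mul_comm]
  exact hy.add_lt_mul_deriv hf hmono hfinv hBbar hfB hR hd t ht

lemma end_value_neg (hf : Differentiable ℝ f) (hmono : StrictMono (deriv f))
    (hfinv : Function.RightInverse finv (deriv f)) (hBbar : Bbar < B) (hfB : f Bbar = f B)
    (hR : 0 < R) (hd : 0 < deriv f B) (hT : R / deriv f B < T)
    (hy : LeftShockSol f finv T B Bbar R y) : y T < 0 := by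
  have hanti := strictAntiOn_Icc_of_hasDerivWithinAt_neg hy.2 fun x hx =>
    lamF_neg_of_mem_Ioo (hmono.strictConvexOn_univ_of_deriv hf.continuous) hfB
      ⟨hy.lt_finv hf hmono hfinv hBbar hR hd x (Ioo_subset_Icc_self hx),
        hy.finv_lt hf hmono hfinv hBbar hfB hR hd x (Ioo_subset_Ioc_self hx)⟩
  simpa only [hy.1] using hanti ⟨le_rfl, hT.le⟩ ⟨hT.le, le_rfl⟩ hT

lemma sub_mul_deriv_lt_end_value (hf : Differentiable ℝ f) (hmono : StrictMono (deriv f))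
    (hfinv : Function.RightInverse finv (deriv f)) (hBbar : Bbar < B) (hR : 0 < R)
    (hd : 0 < deriv f B) (hT : R / deriv f B < T) (hy : LeftShockSol f finv T B Bbar R y) :
    (T - R / deriv f B) * deriv f Bbar < y T := by
  have hmono' := strictMonoOn_Icc_of_hasDerivWithinAt_pos
    (hy.hasDerivWithinAt_add_sub_mul (deriv f Bbar)) fun x hx => sub_pos.2 <|
      deriv_lt_lamF (hmono.strictConvexOn_univ_of_deriv hf.continuous) (hf _)
        (hy.lt_finv hf hmono hfinv hBbar hR hd x (Ioo_subset_Icc_self hx))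
  have := hmono' ⟨le_rfl, hT.le⟩ ⟨hT.le, le_rfl⟩ hT
  simp only [hy.1] at this
  linarith

theorem shock_time_bounds (hf : Differentiable ℝ f) (hmono : StrictMono (deriv f))
    (hfinv : Function.RightInverse finv (deriv f)) {θ : ℝ} (hθ : deriv f θ = 0) (hB : θ < B)
    (hBbar : Bbar ≤ θ) (hfB : f Bbar = f B) (hR : R ∈ Ioo 0 (T * deriv f B))
    (hy : LeftShockSol f finv T B Bbar R y) :
    y T / deriv f Bbar ∈ Ioo 0 T ∧ R < deriv f B * (T - y T / deriv f Bbar) ∧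
      R / deriv f B < T - y T / deriv f Bbar := by
  have hd : 0 < deriv f B := hθ ▸ hmono hB
  have hBbarθ : Bbar < θ := by
    refine hBbar.lt_of_ne ?_
    rintro rfl
    have := deriv_lt_lamF (hmono.strictConvexOn_univ_of_deriv hf.continuous) (hf Bbar) hB
    simp [lamF, hfB, hθ] at this
  have hc : deriv f Bbar < 0 := hθ ▸ hmono hBbarθ
  have hBbarB : Bbar < B := hBbarθ.trans hB
  have hT : R / deriv f B < T := (div_lt_iff₀ hd).2 (by linarith [hR.2])
  have hlow := hy.sub_mul_deriv_lt_end_value hf hmono hfinv hBbarB hR.1 hd hT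
  have hτ : y T / deriv f Bbar < T - R / deriv f B := (div_lt_iff_of_neg hc).2 (by linarith)
  have hτ0 : 0 < y T / deriv f Bbar :=
    div_pos_of_neg_of_neg (hy.end_value_neg hf hmono hfinv hBbarB hfB hR.1 hd hT) hc
  have hR' : R / deriv f B < T - y T / deriv f Bbar := by linarith
  exact ⟨⟨hτ0, by linarith [div_pos hR.1 hd]⟩, (div_lt_iff₀' hd).1 hR', hR'⟩

end LeftShockSol

namespace RightShockSol

variable {f finv : ℝ → ℝ} {T A Abar L : ℝ} {x : ℝ → ℝ}

lemma neg (hx : RightShockSol f finv T A Abar L x) :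
    LeftShockSol (fun u => f (-u)) (fun p => -finv (-p)) T (-A) (-Abar) (-L) (fun t => -x t) := by
  have ht0 : -L / deriv (fun u => f (-u)) (-A) = L / deriv f A := by
    rw [deriv_comp_neg, neg_neg, neg_div_neg_eq]
  refine ⟨by simp only [ht0, hx.1, neg_zero], fun t ht => ?_⟩
  rw [ht0] at ht ⊢
  have hspeed : (-x t + -L) / t = -((x t + L) / t) := by ring
  simp only [hspeed, neg_neg, lamF_comp_neg]
  exact (hx.2 t ht).neg

theorem shock_time_bounds (hf : Differentiable ℝ f) (hmono : StrictMono (deriv f))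
    (hfinv : Function.RightInverse finv (deriv f)) {θ : ℝ} (hθ : deriv f θ = 0) (hA : A < θ)
    (hAbar : θ ≤ Abar) (hfA : f Abar = f A) (hL : L ∈ Ioo (T * deriv f A) 0)
    (hx : RightShockSol f finv T A Abar L x) :
    x T / deriv f Abar ∈ Ioo 0 T ∧ deriv f A * (T - x T / deriv f Abar) < L ∧
      L / deriv f A < T - x T / deriv f Abar := by
  have hderiv (u : ℝ) : deriv (fun w => f (-w)) u = -deriv f (-u) := deriv_comp_neg f u
  have hmono' : StrictMono (deriv fun w => f (-w)) := fun u v huv => by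
    simpa only [hderiv, neg_lt_neg_iff] using hmono (neg_lt_neg huv)
  have hfinv' : Function.RightInverse (fun p => -finv (-p)) (deriv fun w => f (-w)) := fun p => by
    simp only [hderiv, neg_neg, hfinv (-p)]
  obtain ⟨hτ, hL', hL''⟩ := hx.neg.shock_time_bounds (f := fun w => f (-w))
    (hf.comp differentiable_neg) hmono' hfinv' (θ := -θ) (by rw [hderiv, neg_neg, hθ, neg_zero])
    (neg_lt_neg hA) (neg_le_neg hAbar) (by simp only [neg_neg, hfA])
    (by rw [hderiv, neg_neg]; constructor <;> linarith [hL.1, hL.2])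
  simp only [hderiv, neg_neg, neg_div_neg_eq] at hτ hL' hL''
  exact ⟨hτ, by linarith, hL''⟩

end RightShockSol

theorem shock_starting_time_inequalities_general
    (f : ℝ → ℝ) (a : ℝ) (ha : 0 < a) (hf : ContDiff ℝ 2 f)
    (hf2 : ∀ u : ℝ, a ≤ deriv (deriv f) u)
    (θ : ℝ) (hθ : deriv f θ = 0)
    (finv : ℝ → ℝ)
    (hfinv2 : ∀ p : ℝ, deriv f (finv p) = p)
    (T : ℝ) :
    (∀ B Bbar : ℝ, θ < B → Bbar ≤ θ → f Bbar = f B →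
      ∀ R ∈ Ioo (0:ℝ) (T * deriv f B), ∀ y : ℝ → ℝ,
        LeftShockSol f finv T B Bbar R y →
          y T / deriv f Bbar ∈ Ioo (0:ℝ) T ∧
          R < deriv f B * (T - y T / deriv f Bbar) ∧
          R / deriv f B < T - y T / deriv f Bbar) ∧
    (∀ A Abar : ℝ, A < θ → θ ≤ Abar → f Abar = f A →
      ∀ L ∈ Ioo (T * deriv f A) (0:ℝ), ∀ x : ℝ → ℝ,
        RightShockSol f finv T A Abar L x →
          x T / deriv f Abar ∈ Ioo (0:ℝ) T ∧
          deriv f A * (T - x T / deriv f Abar) < L ∧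
          L / deriv f A < T - x T / deriv f Abar) := by
  have hdiff : Differentiable ℝ f := hf.differentiable two_ne_zero
  have hmono : StrictMono (deriv f) := strictMono_of_deriv_pos fun u => ha.trans_le (hf2 u)
  exact ⟨fun B Bbar hB hBbar hfB R hR y hy =>
      hy.shock_time_bounds hdiff hmono hfinv2 hθ hB hBbar hfB hR,
    fun A Abar hA hAbar hfA L hL x hx =>
      hx.shock_time_bounds hdiff hmono hfinv2 hθ hA hAbar hfA hL⟩

/-- **Equations (3.41) and (3.50)**: strict inequalities for the shock starting times. -/
theorem shock_starting_time_inequalities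
    (f : ℝ → ℝ) (a : ℝ) (ha : 0 < a) (hf : ContDiff ℝ 2 f)
    (hf2 : ∀ u : ℝ, a ≤ deriv (deriv f) u)
    (θ : ℝ) (hθ : deriv f θ = 0)
    (finv : ℝ → ℝ) (hfinv1 : ∀ u : ℝ, finv (deriv f u) = u)
    (hfinv2 : ∀ p : ℝ, deriv f (finv p) = p)
    (T : ℝ) (hT : 0 < T) :
    (∀ B Bbar : ℝ, θ < B → Bbar ≤ θ → f Bbar = f B →
      ∀ R ∈ Ioo (0:ℝ) (T * deriv f B), ∀ y : ℝ → ℝ,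
        LeftShockSol f finv T B Bbar R y →
          y T / deriv f Bbar ∈ Ioo (0:ℝ) T ∧
          R < deriv f B * (T - y T / deriv f Bbar) ∧
          R / deriv f B < T - y T / deriv f Bbar) ∧
    (∀ A Abar : ℝ, A < θ → θ ≤ Abar → f Abar = f A →
      ∀ L ∈ Ioo (T * deriv f A) (0:ℝ), ∀ x : ℝ → ℝ,
        RightShockSol f finv T A Abar L x →
          x T / deriv f Abar ∈ Ioo (0:ℝ) T ∧
          deriv f A * (T - x T / deriv f Abar) < L ∧
          L / deriv f A < T - x T / deriv f Abar) :=
  shock_starting_time_inequalities_general f a ha hf hf2 θ hθ finv hfinv2 T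
end
end
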